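/- Let ũ(x) = a·ln(1/|x|) + ((a-1)/2)(|x|²-1) on ℝ⁴∖{0} with a > 1. Then the boundary integral ∫_{∂B₁(0)} [ ((x,ν)/2)(Δũ)² + Δũ ∂_ν(x·∇ũ) - (x·∇ũ) ∂_ν(Δũ) ] dσ equals -4π²a², where ν is the outer unit normal and Δ = -∑∂ᵢᵢ. -/

import Mathlib

/-
Writing `ũ(x) = ψ(|x|²)`, radial calculus gives `∇ũ(x) = 2ψ'(|x|²) x` and, in `ℝ⁴`,
`Δũ(x) = -(8ψ'(|x|²) + 4|x|²ψ''(|x|²))`. So `Δũ = 2a/|x|² - 4(a-1)` and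
`x·∇ũ = (a-1)|x|² - a` are radial again, and on the unit sphere
`Δũ = 4 - 2a`, `x·∇(x·∇ũ) = 2(a-1)`, `x·∇ũ = -1`, `x·∇Δũ = -4a`.
The integrand is therefore the constant `-2a²`, and the sphere has area `2π²`.
-/

open MeasureTheory Metric Real Filter
open scoped RealInnerProductSpace

noncomputable section

/-- The geometer's Laplacian `Δ = -∑ ∂ᵢᵢ` on `ℝ⁴`. -/
def lap (u : EuclideanSpace ℝ (Fin 4) → ℝ) (x : EuclideanSpace ℝ (Fin 4)) : ℝ :=
  -∑ i : Fin 4, iteratedFDeriv ℝ 2 u x ![EuclideanSpace.single i 1, EuclideanSpace.single i 1]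

/-- The bi-Laplacian `Δ²`. -/
def biLap (u : EuclideanSpace ℝ (Fin 4) → ℝ) (x : EuclideanSpace ℝ (Fin 4)) : ℝ :=
  lap (lap u) x

open Topology

section Radial

variable {F : Type*} [NormedAddCommGroup F] [InnerProductSpace ℝ F]

theorem hasFDerivAt_comp_norm_sq {ψ : ℝ → ℝ} {d : ℝ} {y : F} (h : HasDerivAt ψ d (‖y‖ ^ 2)) :
    HasFDerivAt (fun z : F => ψ (‖z‖ ^ 2)) ((2 * d) • innerSL ℝ y) y :=
  (h.comp_hasFDerivAt y (hasStrictFDerivAt_norm_sq y).hasFDerivAt).congr_fderiv <| by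
    ext
    simp only [smul_apply, coe_innerSL_apply, nsmul_eq_mul, Nat.cast_ofNat, smul_eq_mul]
    ring

theorem hasGradientAt_comp_norm_sq [CompleteSpace F] {ψ : ℝ → ℝ} {d : ℝ} {y : F}
    (h : HasDerivAt ψ d (‖y‖ ^ 2)) :
    HasGradientAt (fun z : F => ψ (‖z‖ ^ 2)) ((2 * d) • y) y := by
  rw [hasGradientAt_iff_hasFDerivAt, map_smul]
  exact hasFDerivAt_comp_norm_sq h

theorem fderiv_fderiv_comp_norm_sq_apply {ψ ψ' : ℝ → ℝ} {ψ'' : ℝ} {y : F}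
    (hψ : ∀ᶠ t in 𝓝 (‖y‖ ^ 2), HasDerivAt ψ (ψ' t) t) (hψ' : HasDerivAt ψ' ψ'' (‖y‖ ^ 2))
    (v w : F) :
    fderiv ℝ (fderiv ℝ fun z : F => ψ (‖z‖ ^ 2)) y v w
      = 4 * ψ'' * ⟪y, v⟫ * ⟪y, w⟫ + 2 * ψ' (‖y‖ ^ 2) * ⟪v, w⟫ := by
  have hfderiv : fderiv ℝ (fun z : F => ψ (‖z‖ ^ 2)) =ᶠ[𝓝 y]
      fun z => (2 * ψ' (‖z‖ ^ 2)) • innerSL ℝ z :=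
    ((continuous_norm.pow 2).continuousAt.eventually hψ).mono fun z hz =>
      (hasFDerivAt_comp_norm_sq hz).fderiv
  have hcoeff := hasFDerivAt_comp_norm_sq (y := y) (hψ'.const_mul 2)
  rw [hfderiv.fderiv_eq, (hcoeff.fun_smul (innerSL ℝ (E := F)).hasFDerivAt).fderiv]
  simp only [add_apply, smul_apply, ContinuousLinearMap.smulRight_apply, smul_eq_mul]
  rw [innerSL_apply_apply, innerSL_apply_apply, innerSL_apply_apply]
  ring

end Radial

theorem lap_comp_norm_sq {ψ ψ' : ℝ → ℝ} {ψ'' : ℝ} {y : EuclideanSpace ℝ (Fin 4)}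
    (hψ : ∀ᶠ t in 𝓝 (‖y‖ ^ 2), HasDerivAt ψ (ψ' t) t) (hψ' : HasDerivAt ψ' ψ'' (‖y‖ ^ 2)) :
    lap (fun z => ψ (‖z‖ ^ 2)) y = -(8 * ψ' (‖y‖ ^ 2) + 4 * ‖y‖ ^ 2 * ψ'') := by
  simp only [lap, iteratedFDeriv_two_apply, Matrix.cons_val_zero, Matrix.cons_val_one,
    fderiv_fderiv_comp_norm_sq_apply hψ hψ', EuclideanSpace.inner_single_right]
  simp only [ringHom_apply, one_mul, EuclideanSpace.norm_sq_eq, norm_eq_abs, sq_abs,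
    Fin.sum_univ_four, PiLp.single_eq_same, mul_one]
  ring

theorem measureReal_toSphere_univ_of_finrank_eq {E : Type*} [NormedAddCommGroup E]
    [InnerProductSpace ℝ E] [FiniteDimensional ℝ E] [MeasurableSpace E] [BorelSpace E]
    [Nontrivial E] {k : ℕ} (hk : Module.finrank ℝ E = 2 * k) :
    (volume : Measure E).toSphere.real Set.univ = 2 * k * π ^ k / k.factorial := by
  rw [measureReal_def, Measure.toSphere_apply_univ,
    InnerProductSpace.volume_ball_of_dim_even hk, hk]
  simp only [ENNReal.toReal_mul, ENNReal.toReal_pow, ENNReal.toReal_natCast,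
    ENNReal.toReal_ofReal zero_le_one,
    ENNReal.toReal_ofReal (by positivity : 0 ≤ π ^ k / k.factorial)]
  push_cast
  ring

local notation "ℝ⁴" => EuclideanSpace ℝ (Fin 4)

/-- `ũ(x) = uProfile a ‖x‖²`. -/
def uProfile (a t : ℝ) : ℝ := -(a / 2) * Real.log t + (a - 1) / 2 * (t - 1)

section uProfile

variable {a : ℝ}

theorem eq_uProfile_norm_sq {u : ℝ⁴ → ℝ}
    (hu : ∀ x : ℝ⁴, u x = a * Real.log (1 / ‖x‖) + (a - 1) / 2 * (‖x‖ ^ 2 - 1)) :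
    u = fun z => uProfile a (‖z‖ ^ 2) := by
  funext z
  rw [hu, uProfile, one_div, Real.log_inv, Real.log_pow]
  push_cast
  ring

theorem hasDerivAt_uProfile {t : ℝ} (ht : t ≠ 0) :
    HasDerivAt (uProfile a) ((a - 1) / 2 - a / (2 * t)) t := by
  have h := ((Real.hasDerivAt_log ht).const_mul (-(a / 2))).add
    (((hasDerivAt_id' t).sub_const 1).const_mul ((a - 1) / 2))
  exact h.congr_deriv (by ring)

theorem hasDerivAt_deriv_uProfile {t : ℝ} (ht : t ≠ 0) :
    HasDerivAt (fun t => (a - 1) / 2 - a / (2 * t)) (a / (2 * t ^ 2)) t := by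
  have h := ((hasDerivAt_const t a).div ((hasDerivAt_id' t).const_mul 2)
    (mul_ne_zero two_ne_zero ht)).const_sub ((a - 1) / 2)
  exact h.congr_deriv (by field_simp; ring)

variable {y : ℝ⁴}

theorem hasGradientAt_uProfile (hy : y ≠ 0) :
    HasGradientAt (fun z => uProfile a (‖z‖ ^ 2)) ((a - 1 - a / ‖y‖ ^ 2) • y) y := by
  have hy2 : ‖y‖ ^ 2 ≠ 0 := pow_ne_zero 2 (norm_ne_zero_iff.2 hy)
  convert hasGradientAt_comp_norm_sq (hasDerivAt_uProfile hy2) using 2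
  field_simp

theorem inner_gradient_uProfile (hy : y ≠ 0) :
    ⟪y, gradient (fun z => uProfile a (‖z‖ ^ 2)) y⟫ = (a - 1) * ‖y‖ ^ 2 - a := by
  rw [(hasGradientAt_uProfile hy).gradient, real_inner_smul_right, real_inner_self_eq_norm_sq]
  field_simp

theorem lap_uProfile (hy : y ≠ 0) :
    lap (fun z => uProfile a (‖z‖ ^ 2)) y = 2 * a / ‖y‖ ^ 2 - 4 * (a - 1) := by
  have hy2 : ‖y‖ ^ 2 ≠ 0 := pow_ne_zero 2 (norm_ne_zero_iff.2 hy)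
  rw [lap_comp_norm_sq ((eventually_ne_nhds hy2).mono fun t => hasDerivAt_uProfile)
    (hasDerivAt_deriv_uProfile hy2)]
  field_simp
  ring

theorem gradient_lap_uProfile (hy : y ≠ 0) :
    gradient (lap fun z => uProfile a (‖z‖ ^ 2)) y = (-(4 * a) / ‖y‖ ^ 4) • y := by
  have hlap : (lap fun z => uProfile a (‖z‖ ^ 2)) =ᶠ[𝓝 y]
      fun z => (fun t => 2 * a / t - 4 * (a - 1)) (‖z‖ ^ 2) :=
    (eventually_ne_nhds hy).mono fun z => lap_uProfile
  have hy2 : ‖y‖ ^ 2 ≠ 0 := pow_ne_zero 2 (norm_ne_zero_iff.2 hy)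
  have hd : HasDerivAt (fun t => 2 * a / t - 4 * (a - 1)) (-(2 * a) / (‖y‖ ^ 2) ^ 2) (‖y‖ ^ 2) :=
    (((hasDerivAt_const _ (2 * a)).div (hasDerivAt_id' _) hy2).sub_const (4 * (a - 1))).congr_deriv
      (by ring)
  rw [((hasGradientAt_comp_norm_sq hd).congr_of_eventuallyEq hlap).gradient]
  congr 1
  field_simp
  ring

theorem gradient_inner_gradient_uProfile (hy : y ≠ 0) :
    gradient (fun z => ⟪z, gradient (fun z => uProfile a (‖z‖ ^ 2)) z⟫) y = (2 * (a - 1)) • y := by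
  have h : (fun z => ⟪z, gradient (fun z => uProfile a (‖z‖ ^ 2)) z⟫) =ᶠ[𝓝 y]
      fun z => (fun t => (a - 1) * t - a) (‖z‖ ^ 2) :=
    (eventually_ne_nhds hy).mono fun z => inner_gradient_uProfile
  have hd : HasDerivAt (fun t => (a - 1) * t - a) (a - 1) (‖y‖ ^ 2) :=
    (((hasDerivAt_id' _).const_mul (a - 1)).sub_const a).congr_deriv (mul_one _)
  exact ((hasGradientAt_comp_norm_sq hd).congr_of_eventuallyEq h).gradient

end uProfile

theorem stmt10_general (a : ℝ)
    (u : EuclideanSpace ℝ (Fin 4) → ℝ)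
    (hu : ∀ x : EuclideanSpace ℝ (Fin 4),
      u x = a * Real.log (1 / ‖x‖) + (a - 1) / 2 * (‖x‖ ^ 2 - 1)) :
    ∫ x : (Metric.sphere (0 : EuclideanSpace ℝ (Fin 4)) 1),
        (⟪(x : EuclideanSpace ℝ (Fin 4)), (x : EuclideanSpace ℝ (Fin 4))⟫ / 2
            * (lap u x) ^ 2
          + lap u x * ⟪(x : EuclideanSpace ℝ (Fin 4)),
              gradient (fun y : EuclideanSpace ℝ (Fin 4) => ⟪y, gradient u y⟫) x⟫
          - ⟪(x : EuclideanSpace ℝ (Fin 4)), gradient u x⟫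
            * ⟪(x : EuclideanSpace ℝ (Fin 4)), gradient (lap u) x⟫)
        ∂((volume : Measure (EuclideanSpace ℝ (Fin 4))).toSphere)
      = -4 * Real.pi ^ 2 * a ^ 2 := by
  obtain rfl := eq_uProfile_norm_sq hu
  calc _ = ∫ _ : sphere (0 : ℝ⁴) 1, -2 * a ^ 2 ∂(volume : Measure ℝ⁴).toSphere :=
        integral_congr_ae <| ae_of_all _ fun x => ?_
    _ = -4 * π ^ 2 * a ^ 2 := by
        rw [integral_const, smul_eq_mul,
          measureReal_toSphere_univ_of_finrank_eq (k := 2) (by simp)]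
        norm_num
        ring
  have hx0 : (x : ℝ⁴) ≠ 0 := ne_zero_of_mem_unit_sphere x
  dsimp only
  rw [lap_uProfile hx0, gradient_inner_gradient_uProfile hx0, gradient_lap_uProfile hx0,
    inner_gradient_uProfile hx0, real_inner_smul_right, real_inner_smul_right,
    real_inner_self_eq_norm_sq, norm_eq_of_mem_sphere]
  ring

theorem stmt10 (a : ℝ) (ha : 1 < a)
    (u : EuclideanSpace ℝ (Fin 4) → ℝ)
    (hu : ∀ x : EuclideanSpace ℝ (Fin 4),
      u x = a * Real.log (1 / ‖x‖) + (a - 1) / 2 * (‖x‖ ^ 2 - 1)) :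
    ∫ x : (Metric.sphere (0 : EuclideanSpace ℝ (Fin 4)) 1),
        (⟪(x : EuclideanSpace ℝ (Fin 4)), (x : EuclideanSpace ℝ (Fin 4))⟫ / 2
            * (lap u x) ^ 2
          + lap u x * ⟪(x : EuclideanSpace ℝ (Fin 4)),
              gradient (fun y : EuclideanSpace ℝ (Fin 4) => ⟪y, gradient u y⟫) x⟫
          - ⟪(x : EuclideanSpace ℝ (Fin 4)), gradient u x⟫
            * ⟪(x : EuclideanSpace ℝ (Fin 4)), gradient (lap u) x⟫)
        ∂((volume : Measure (EuclideanSpace ℝ (Fin 4))).toSphere)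
      = -4 * Real.pi ^ 2 * a ^ 2 :=
  stmt10_general a u hu
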